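/- arXiv:2108.07604 — 8 statements merged into one kernel-verified Lean document; each statement's English description precedes it below -/
import Mathlib

section
/- The function Ψ is invariant under the coordinate form T of the 3-diagonal pentagram map: for every (x,y) ∈ ℝ² with xy ≠ 0, at which T is defined, and such that the image point (x',y') = T(x,y) satisfies x'y' ≠ 0, one has Ψ(T(x,y)) = Ψ(x,y). -/
/-- Denominator whose nonvanishing defines the domain of the 3-diagonal map `T`. -/
noncomputable def tDen (x y : ℝ) : ℝ :=
  (1 + (x + y)) *
    ((x ^ 2 + y ^ 2) + 2 * (x ^ 3 + y ^ 3) + (x ^ 4 + y ^ 4)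
      - 2 * (x * y) - 2 * (x * y ^ 2 + y * x ^ 2) + 2 * (x ^ 2 * y ^ 2))

/-- The coefficient `A` of the 3-diagonal pentagram map. -/
noncomputable def tA (x y : ℝ) : ℝ := ((x + y) + (x ^ 2 + y ^ 2)) / tDen x y

/-- The quantity `B` of the 3-diagonal pentagram map. -/
noncomputable def tB (x y : ℝ) : ℝ :=
  (x - y) + 2 * (x ^ 2 - y ^ 2) + (x ^ 3 - y ^ 3) + (x * y ^ 2 - y * x ^ 2)

/-- The 3-diagonal pentagram map on octagons with 4-fold rotational symmetry,
in coordinates: `T(x,y) = (-Ax(B - 2xy), Ay(B + 2xy))`. -/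
noncomputable def T (p : ℝ × ℝ) : ℝ × ℝ :=
  (-(tA p.1 p.2) * p.1 * (tB p.1 p.2 - 2 * p.1 * p.2),
    (tA p.1 p.2) * p.2 * (tB p.1 p.2 + 2 * p.1 * p.2))

/-- The invariant `Ψ(x,y) = (x-y)(x²+y²-1)/(xy)`. -/
noncomputable def Psi (p : ℝ × ℝ) : ℝ :=
  ((p.1 - p.2) * (p.1 ^ 2 + p.2 ^ 2 - 1)) / (p.1 * p.2)

/-!
Write `T (x, y) = (P / D, Q / D)` with polynomial `P`, `Q` and `D = tDen x y = (1 + x + y) E`.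
With `S = x + y + x² + y²` the numerator of `A` and `W = B² - 4x²y²`, three polynomial identities

  `P - Q = -(x - y)(1 + x + y) S²`,  `P Q = -x y S² W`,  `P² + Q² - D² = (x² + y² - 1) W E`

show that every factor other than those of `Ψ(x, y)` cancels in
`Ψ(P / D, Q / D) = (P - Q)(P² + Q² - D²) / (P Q D)`.
-/

section

variable (x y : ℝ)

noncomputable def tS : ℝ := (x + y) + (x ^ 2 + y ^ 2)

noncomputable def tE : ℝ :=
  (x ^ 2 + y ^ 2) + 2 * (x ^ 3 + y ^ 3) + (x ^ 4 + y ^ 4)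
    - 2 * (x * y) - 2 * (x * y ^ 2 + y * x ^ 2) + 2 * (x ^ 2 * y ^ 2)

noncomputable def tP : ℝ := -x * tS x y * (tB x y - 2 * x * y)

noncomputable def tQ : ℝ := y * tS x y * (tB x y + 2 * x * y)

theorem tDen_eq : tDen x y = (1 + (x + y)) * tE x y := rfl

theorem T_eq_div : T (x, y) = (tP x y / tDen x y, tQ x y / tDen x y) := by
  simp only [T, tA, tP, tQ, tS, Prod.mk.injEq]
  constructor <;> ring

theorem tP_sub_tQ : tP x y - tQ x y = -((x - y) * (1 + (x + y)) * tS x y ^ 2) := by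
  simp only [tP, tQ, tS, tB]
  ring

theorem tP_mul_tQ :
    tP x y * tQ x y = -(x * y * tS x y ^ 2 * ((tB x y - 2 * x * y) * (tB x y + 2 * x * y))) := by
  simp only [tP, tQ]
  ring

theorem tP_sq_add_tQ_sq_sub_tDen_sq :
    tP x y ^ 2 + tQ x y ^ 2 - tDen x y ^ 2
      = (x ^ 2 + y ^ 2 - 1) * ((tB x y - 2 * x * y) * (tB x y + 2 * x * y)) * tE x y := by
  simp only [tP, tQ, tS, tB, tDen, tE]
  ring

end

theorem Psi_div_div (P Q D : ℝ) :
    Psi (P / D, Q / D) = (P - Q) * (P ^ 2 + Q ^ 2 - D ^ 2) / (P * Q * D) := by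
  rcases eq_or_ne D 0 with rfl | hD
  · simp [Psi]
  rcases eq_or_ne (P * Q) 0 with hPQ | hPQ
  · rcases mul_eq_zero.mp hPQ with rfl | rfl <;> simp [Psi]
  obtain ⟨hP, hQ⟩ := mul_ne_zero_iff.mp hPQ
  simp only [Psi]
  field_simp

theorem psi_invariant_under_T_general (x y : ℝ) (hxy : x * y ≠ 0)
    (himg : (T (x, y)).1 * (T (x, y)).2 ≠ 0) :
    Psi (T (x, y)) = Psi (x, y) := by
  rw [T_eq_div] at himg ⊢
  obtain ⟨hPD, hQD⟩ := mul_ne_zero_iff.mp himg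
  obtain ⟨hP, hD⟩ := div_ne_zero_iff.mp hPD
  have hQ := (div_ne_zero_iff.mp hQD).1
  rw [Psi_div_div, Psi, div_eq_div_iff (by positivity) hxy, tP_sq_add_tQ_sq_sub_tDen_sq,
    tP_sub_tQ, tP_mul_tQ, tDen_eq]
  ring

/-- Ψ is invariant under the coordinate form `T` of the 3-diagonal pentagram map. -/
theorem psi_invariant_under_T (x y : ℝ) (hxy : x * y ≠ 0) (hdef : tDen x y ≠ 0)
    (himg : (T (x, y)).1 * (T (x, y)).2 ≠ 0) :
    Psi (T (x, y)) = Psi (x, y) :=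
  psi_invariant_under_T_general x y hxy himg
end

section
/- For every λ ∈ ℂ with λ ∉ {0, 2, −2, 4i√2, −4i√2}, the projective cubic curve E_λ = {V_λ = 0} is nonsingular: for every (x,y,z) ∈ ℂ³ with (x,y,z) ≠ (0,0,0) and V_λ(x,y,z) = 0, the gradient (∂V_λ/∂x, ∂V_λ/∂y, ∂V_λ/∂z)(x,y,z) ≠ (0,0,0). -/
/-!
At a singular point the partials satisfy `V_x + V_y = (x + y) (2 (x - y) - λ z)`, and `z ≠ 0`
unless `λ = 0`. On the line `x + y = 0` the remaining equations force `λ z = 4 x` and then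
`λ² = -32`; on the plane `2 (x - y) = λ z` they force `z² = -x y` and `x² - x y + y² = 0`,
and eliminating `z` gives `λ² = 4`.
-/

/-- The homogeneous cubic `V_λ(x,y,z) = x³ - y³ - x²y + xy² - xz² + yz² - λxyz` over ℂ. -/
def Vc (l x y z : ℂ) : ℂ :=
  x ^ 3 - y ^ 3 - x ^ 2 * y + x * y ^ 2 - x * z ^ 2 + y * z ^ 2 - l * x * y * z

/-- The partial derivatives of `Vc l` (over any field) vanish at `(x, y, z)`. -/
structure GradVanishes {K : Type*} [Field K] (l x y z : K) : Prop where
  dx : 3 * x ^ 2 - 2 * x * y + y ^ 2 - z ^ 2 - l * y * z = 0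
  dy : -x ^ 2 + 2 * x * y - 3 * y ^ 2 + z ^ 2 - l * x * z = 0
  dz : 2 * z * (y - x) - l * x * y = 0

namespace GradVanishes

variable {K : Type*} [Field K] {l x y z : K}

theorem add_mul_eq_zero (h : GradVanishes l x y z) :
    (x + y) * (2 * (x - y) - l * z) = 0 := by
  linear_combination h.dx + h.dy

variable [CharZero K]

theorem z_ne_zero (h : GradVanishes l x y z) (hl : l ≠ 0) (hne : (x, y, z) ≠ (0, 0, 0)) :
    z ≠ 0 := by
  rintro rfl
  have hxy : l * (x * y) = 0 := by linear_combination -h.dz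
  rcases mul_eq_zero.mp ((mul_eq_zero.mp hxy).resolve_left hl) with rfl | rfl
  · have : y ^ 2 = 0 := by linear_combination h.dx
    exact hne (by simp [pow_eq_zero_iff two_ne_zero |>.mp this])
  · have : x ^ 2 = 0 := by linear_combination h.dx / 3
    exact hne (by simp [pow_eq_zero_iff two_ne_zero |>.mp this])

theorem sq_eq_neg_32_of_add_eq_zero (h : GradVanishes l x y z) (hz : z ≠ 0)
    (hxy : x + y = 0) : l ^ 2 = -32 := by
  obtain rfl : y = -x := by linear_combination hxy
  have hx : x ≠ 0 := by
    rintro rfl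
    have : z ^ 2 = 0 := by linear_combination -h.dx
    exact hz (pow_eq_zero_iff two_ne_zero |>.mp this)
  have hlx : l * x = 4 * z := by
    have : x * (l * x - 4 * z) = 0 := by linear_combination h.dz
    linear_combination (mul_eq_zero.mp this).resolve_left hx
  have : x ^ 2 * (3 * (l ^ 2 + 32)) = 0 := by
    linear_combination 16 * h.dx + (3 * l * x - 4 * z) * hlx
  have := (mul_eq_zero.mp this).resolve_left (pow_ne_zero 2 hx)
  linear_combination this / 3

theorem z_sq_eq_neg_mul_of_two_mul_sub_eq (h : GradVanishes l x y z) (hl : l ≠ 0)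
    (hz : z ≠ 0) (hxy : 2 * (x - y) = l * z) : z ^ 2 = -(x * y) := by
  have : (y - x) * (z ^ 2 + x * y) = 0 := by
    linear_combination (z / 2) * h.dz - (x * y / 2) * hxy
  refine eq_neg_of_add_eq_zero_left ((mul_eq_zero.mp this).resolve_left fun hyx => ?_)
  have : l * z = 0 := by linear_combination -hxy - 2 * hyx
  exact mul_ne_zero hl hz this

theorem sq_eq_four_of_two_mul_sub_eq (h : GradVanishes l x y z) (hl : l ≠ 0)
    (hz : z ≠ 0) (hxy : 2 * (x - y) = l * z) : l ^ 2 = 4 := by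
  have hz2 := h.z_sq_eq_neg_mul_of_two_mul_sub_eq hl hz hxy
  have hQ : x ^ 2 - x * y + y ^ 2 = 0 := by
    linear_combination (h.dx - h.dy + (x - y) * hxy + 2 * hz2) / 6
  have hxy0 : x * y ≠ 0 := fun h0 =>
    hz (pow_eq_zero_iff two_ne_zero |>.mp (by rw [hz2, h0, neg_zero]))
  have hlyz : l * (y * z) = 2 * x ^ 2 := by linear_combination -h.dx - hz2 + hQ
  have hlxz : l * (x * z) = -(2 * y ^ 2) := by linear_combination -h.dy + hz2 - hQ
  have : (l ^ 2 - 4) * (x * y) ^ 2 = 0 := by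
    linear_combination -(l * x * z) * hlyz - 2 * x ^ 2 * hlxz + l ^ 2 * (x * y) * hz2
  linear_combination (mul_eq_zero.mp this).resolve_right (pow_ne_zero 2 hxy0)

theorem eq_zero_or_sq_eq_four_or_sq_eq_neg_32 (h : GradVanishes l x y z) (hne : (x, y, z) ≠ (0, 0, 0)) :
    l = 0 ∨ l ^ 2 = 4 ∨ l ^ 2 = -32 := by
  by_cases hl : l = 0
  · exact Or.inl hl
  have hz := h.z_ne_zero hl hne
  rcases mul_eq_zero.mp h.add_mul_eq_zero with hxy | hxy
  · exact Or.inr (Or.inr (h.sq_eq_neg_32_of_add_eq_zero hz hxy))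
  · exact Or.inr (Or.inl (h.sq_eq_four_of_two_mul_sub_eq hl hz (sub_eq_zero.mp hxy)))

end GradVanishes

theorem Complex.four_mul_I_mul_sqrt_two_sq : (4 * Complex.I * (Real.sqrt 2 : ℂ)) ^ 2 = -32 := by
  have hs : ((Real.sqrt 2 : ℝ) : ℂ) ^ 2 = 2 := by
    rw [← Complex.ofReal_pow, Real.sq_sqrt zero_le_two, Complex.ofReal_ofNat]
  linear_combination 16 * ((Real.sqrt 2 : ℝ) : ℂ) ^ 2 * Complex.I_sq - 16 * hs

theorem E_lambda_nonsingular_general (l : ℂ) (h0 : l ≠ 0) (h2 : l ≠ 2) (h2' : l ≠ -2)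
    (h4 : l ≠ 4 * Complex.I * (Real.sqrt 2 : ℂ))
    (h4' : l ≠ -(4 * Complex.I * (Real.sqrt 2 : ℂ)))
    (x y z : ℂ) (hne : (x, y, z) ≠ (0, 0, 0)) :
    (3 * x ^ 2 - 2 * x * y + y ^ 2 - z ^ 2 - l * y * z,
     -x ^ 2 + 2 * x * y - 3 * y ^ 2 + z ^ 2 - l * x * z,
     2 * z * (y - x) - l * x * y) ≠ (0, 0, 0) := by
  intro hgrad
  simp only [Prod.mk.injEq] at hgrad
  obtain ⟨dx, dy, dz⟩ := hgrad
  rcases GradVanishes.eq_zero_or_sq_eq_four_or_sq_eq_neg_32 ⟨dx, dy, dz⟩ hne with hl | hl | hl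
  · exact h0 hl
  · rw [show (4 : ℂ) = 2 ^ 2 by norm_num, sq_eq_sq_iff_eq_or_eq_neg] at hl
    exact hl.elim h2 h2'
  · rw [← Complex.four_mul_I_mul_sqrt_two_sq, sq_eq_sq_iff_eq_or_eq_neg] at hl
    exact hl.elim h4 h4'

/-- For λ ∉ {0, ±2, ±4i√2}, the projective cubic curve `V_λ = 0` is nonsingular:
the gradient of `V_λ` does not vanish at any nonzero point of the zero set. -/
theorem E_lambda_nonsingular (l : ℂ) (h0 : l ≠ 0) (h2 : l ≠ 2) (h2' : l ≠ -2)
    (h4 : l ≠ 4 * Complex.I * (Real.sqrt 2 : ℂ))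
    (h4' : l ≠ -(4 * Complex.I * (Real.sqrt 2 : ℂ)))
    (x y z : ℂ) (hne : (x, y, z) ≠ (0, 0, 0)) (hV : Vc l x y z = 0) :
    (3 * x ^ 2 - 2 * x * y + y ^ 2 - z ^ 2 - l * y * z,
     -x ^ 2 + 2 * x * y - 3 * y ^ 2 + z ^ 2 - l * x * z,
     2 * z * (y - x) - l * x * y) ≠ (0, 0, 0) :=
  E_lambda_nonsingular_general l h0 h2 h2' h4 h4' x y z hne
end

section
/- For every λ ∈ ℝ with λ ∉ {−2, 0, 2}, the set of real projective points E_λ(ℝ) = { [x:y:z] ∈ ℝP² : V_λ(x,y,z) = 0 } (well-defined by homogeneity of V_λ) has exactly two connected components, each invariant under the reflection [x:y:z] ↦ [−y:−x:z]; exactly one of the two components is contained in the affine chart { [x:y:z] : z ≠ 0 }. -/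
/-- The homogeneous cubic `V_λ(x,y,z) = x³ - y³ - x²y + xy² - xz² + yz² - λxyz` over ℝ. -/
def Vr (l x y z : ℝ) : ℝ :=
  x ^ 3 - y ^ 3 - x ^ 2 * y + x * y ^ 2 - x * z ^ 2 + y * z ^ 2 - l * x * y * z

/-- The set of real projective points of the cubic curve `E_λ`.  (By homogeneity of
`V_λ`, membership does not depend on the choice of representative `p.rep`.) -/
noncomputable def Epts (l : ℝ) : Set (Projectivization ℝ (Fin 3 → ℝ)) :=
  {p | Vr l (p.rep 0) (p.rep 1) (p.rep 2) = 0}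

/-- The linear map `(x,y,z) ↦ (-y,-x,z)` inducing the reflection in the line `y = -x`. -/
def reflLin : (Fin 3 → ℝ) →ₗ[ℝ] (Fin 3 → ℝ) where
  toFun v := ![-v 1, -v 0, v 2]
  map_add' a b := by
    funext i; fin_cases i <;> simp <;> ring
  map_smul' c a := by
    funext i; fin_cases i <;> simp [mul_comm]

theorem reflLin_injective : Function.Injective reflLin := by
  intro a b h
  have h0 := congrFun h 0
  have h1 := congrFun h 1
  have h2 := congrFun h 2
  simp [reflLin] at h0 h1 h2
  funext i
  fin_cases i <;> simp [h0, h1, h2]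

/-- The quotient topology on the real projective plane. -/
noncomputable instance : TopologicalSpace (Projectivization ℝ (Fin 3 → ℝ)) :=
  instTopologicalSpaceQuotient

/-- The reflection `[x:y:z] ↦ [-y:-x:z]` of the real projective plane. -/
noncomputable def reflRho : Projectivization ℝ (Fin 3 → ℝ) → Projectivization ℝ (Fin 3 → ℝ) :=
  Projectivization.map reflLin reflLin_injective

/-!
In the coordinates `u = x - y`, `v = x + y` the curve reads
`v² (λz - 2u) = u (2u² + λuz - 4z²)`, which is quadratic in `v`. Putting `u = λsz` and
`Q(s) = λ²(2s² + s) - 4 = 2λ²(s - r)(s + r + 1/2)` with `r > 0`, the real points are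
`(u : v : z) = (λs : ±√(s Q(s) / (1 - 2s)) : 1)` for `s ∈ [-r - 1/2, 0]` (the oval) and for
`s` between `r` and `1/2` (the pseudoline, through `[1 : 1 : 0]` at `s = 1/2`). Each piece is the
union of the two sign branches, which are arcs meeting where `s Q(s) = 0`, so it is connected.
The two pieces are cut out of `E_λ` by the closed sign conditions `λuz ≤ 0` and `λuz ≥ 0`
(suitably completed at `z = 0`), hence they are its connected components. The reflection is
`v ↦ -v`, which preserves both.
-/

open Projectivization Set
open scoped LinearAlgebra.Projectivization

local notation "ℝP²" => ℙ ℝ (Fin 3 → ℝ)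

lemma Projectivization.mk_mem_setOf_rep {K V : Type*} [DivisionRing K] [AddCommGroup V]
    [Module K V] {P : V → Prop} (hP : ∀ c : K, c ≠ 0 → ∀ w, P (c • w) ↔ P w) {w : V}
    (hw : w ≠ 0) : mk K w hw ∈ {p : ℙ K V | P p.rep} ↔ P w := by
  obtain ⟨c, hc⟩ := (mk_eq_mk_iff' K _ _ (rep_nonzero (mk K w hw)) hw).1 (mk_rep _)
  have hc0 : c ≠ 0 := by rintro rfl; exact rep_nonzero (mk K w hw) (by rw [← hc, zero_smul])
  change P (mk K w hw).rep ↔ P w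
  rw [← hc, hP c hc0]

lemma Projectivization.isClosed_setOf_rep {P : (Fin 3 → ℝ) → Prop}
    (hP : ∀ c : ℝ, c ≠ 0 → ∀ w, P (c • w) ↔ P w) (hc : IsClosed {w | P w}) :
    IsClosed {p : ℝP² | P p.rep} := by
  have hq : Topology.IsQuotientMap fun w : {w : Fin 3 → ℝ // w ≠ 0} => mk ℝ w.1 w.2 :=
    isQuotientMap_quotient_mk'
  rw [← hq.isClosed_preimage]
  convert hc.preimage continuous_subtype_val using 1
  ext w
  exact mk_mem_setOf_rep hP w.2

def projImage (γ : ℝ → Fin 3 → ℝ) (I : Set ℝ) : Set ℝP² :=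
  {p | ∃ s ∈ I, ∃ h : γ s ≠ 0, mk ℝ (γ s) h = p}

lemma IsPreconnected.projImage {γ : ℝ → Fin 3 → ℝ} {I : Set ℝ} (hI : IsPreconnected I)
    (hγ : ContinuousOn γ I) (hne : ∀ s ∈ I, γ s ≠ 0) : IsPreconnected (projImage γ I) := by
  have : PreconnectedSpace I := Subtype.preconnectedSpace hI
  convert isPreconnected_range (f := fun s : I => mk ℝ (γ s) (hne s s.2))
    (continuous_quotient_mk'.comp (hγ.domRestrict.subtype_mk _))
  ext p
  constructor
  · rintro ⟨s, hs, -, rfl⟩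
    exact ⟨⟨s, hs⟩, rfl⟩
  · rintro ⟨s, rfl⟩
    exact ⟨s, s.2, _, rfl⟩

lemma connectedComponentIn_eq_of_isClosed {X : Type*} [TopologicalSpace X] {E A B : Set X}
    (hE : E = A ∪ B) (hAB : Disjoint A B) (hA : IsClosed A) (hB : IsClosed B)
    (hAc : IsPreconnected A) {p : X} (hp : p ∈ A) : connectedComponentIn E p = A := by
  have hAE : A ⊆ E := hE ▸ subset_union_left
  refine subset_antisymm ?_ (hAc.subset_connectedComponentIn hp hAE)
  have hsub : connectedComponentIn E p ⊆ A ∪ B := hE ▸ connectedComponentIn_subset E p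
  have hdisj : connectedComponentIn E p ∩ (A ∩ B) = ∅ := by
    rw [hAB.inter_eq, inter_empty]
  refine ((isPreconnected_iff_subset_of_disjoint_closed.1 isPreconnected_connectedComponentIn)
    A B hA hB hsub hdisj).resolve_right fun h => ?_
  exact hAB.ne_of_mem hp (h (mem_connectedComponentIn (hAE hp))) rfl

noncomputable def uvzVec (u v z : ℝ) : Fin 3 → ℝ := ![(v + u) / 2, (v - u) / 2, z]

lemma uvzVec_eq_zero_iff {u v z : ℝ} : uvzVec u v z = 0 ↔ u = 0 ∧ v = 0 ∧ z = 0 := by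
  refine ⟨fun h => ?_, fun ⟨hu, hv, hz⟩ => by simp [uvzVec, hu, hv, hz]⟩
  have h0 := congrFun h 0
  have h1 := congrFun h 1
  have h2 := congrFun h 2
  simp only [uvzVec, Matrix.cons_val, Pi.zero_apply] at h0 h1 h2
  exact ⟨by linarith, by linarith, h2⟩

lemma uvzVec_ne_zero_of_ne_zero {u v z : ℝ} (hz : z ≠ 0) : uvzVec u v z ≠ 0 :=
  fun h => hz (uvzVec_eq_zero_iff.1 h).2.2

lemma smul_uvzVec (c u v z : ℝ) : c • uvzVec u v z = uvzVec (c * u) (c * v) (c * z) := by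
  ext i; fin_cases i <;> simp [uvzVec] <;> ring

lemma exists_eq_mk_uvzVec (p : ℝP²) : ∃ u v z, ∃ h : uvzVec u v z ≠ 0, p = mk ℝ _ h := by
  induction p using Projectivization.ind with
  | h w hw =>
    have hw' : uvzVec (w 0 - w 1) (w 0 + w 1) (w 2) = w := by
      ext i; fin_cases i <;> simp [uvzVec]
    exact ⟨_, _, _, hw' ▸ hw, by simp only [hw']⟩

def cubicUVZ (l u v z : ℝ) : ℝ :=
  v ^ 2 * (2 * u - l * z) + 2 * u ^ 3 + l * u ^ 2 * z - 4 * u * z ^ 2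

lemma Vr_uvzVec (l u v z : ℝ) :
    Vr l (uvzVec u v z 0) (uvzVec u v z 1) (uvzVec u v z 2) = cubicUVZ l u v z / 4 := by
  simp only [uvzVec, Vr, cubicUVZ, Matrix.cons_val]; ring

/-- The bound on `v` holds on the whole oval (`ovalCond_of_cubicUVZ_eq_zero`); it is there to
exclude the point `[1 : 1 : 0]` with a closed condition. -/
def OvalCond (l u v z : ℝ) : Prop :=
  l * u * z ≤ 0 ∧ 16 * v ^ 2 ≤ (l ^ 2 + 32) * z ^ 2

def PseudolineCond (l u z : ℝ) : Prop :=
  0 ≤ l * u * z ∧ l * (2 * u * z - l * z ^ 2) * (2 * u ^ 2 + l * u * z - 4 * z ^ 2) ≤ 0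

lemma Vr_smul_eq_zero_iff (l c : ℝ) (hc : c ≠ 0) (w : Fin 3 → ℝ) :
    Vr l ((c • w) 0) ((c • w) 1) ((c • w) 2) = 0 ↔ Vr l (w 0) (w 1) (w 2) = 0 := by
  simp only [Pi.smul_apply, smul_eq_mul]
  rw [show Vr l (c * w 0) (c * w 1) (c * w 2) = c ^ 3 * Vr l (w 0) (w 1) (w 2) by
    unfold Vr; ring]
  simp [hc]

lemma ovalCond_smul_iff (l c : ℝ) (hc : c ≠ 0) (w : Fin 3 → ℝ) :
    OvalCond l ((c • w) 0 - (c • w) 1) ((c • w) 0 + (c • w) 1) ((c • w) 2) ↔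
      OvalCond l (w 0 - w 1) (w 0 + w 1) (w 2) := by
  have hc2 : 0 < c ^ 2 := by positivity
  simp only [OvalCond, Pi.smul_apply, smul_eq_mul]
  constructor <;> rintro ⟨h1, h2⟩ <;> constructor <;> nlinarith

lemma pseudolineCond_smul_iff (l c : ℝ) (hc : c ≠ 0) (w : Fin 3 → ℝ) :
    PseudolineCond l ((c • w) 0 - (c • w) 1) ((c • w) 2) ↔
      PseudolineCond l (w 0 - w 1) (w 2) := by
  have hc2 : 0 < c ^ 2 := by positivity
  have hc4 : 0 < c ^ 4 := by positivity
  simp only [PseudolineCond, Pi.smul_apply, smul_eq_mul]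
  constructor <;> rintro ⟨h1, h2⟩ <;> constructor <;> nlinarith

def oval (l : ℝ) : Set ℝP² :=
  Epts l ∩ {p | OvalCond l (p.rep 0 - p.rep 1) (p.rep 0 + p.rep 1) (p.rep 2)}

def pseudoline (l : ℝ) : Set ℝP² :=
  Epts l ∩ {p | PseudolineCond l (p.rep 0 - p.rep 1) (p.rep 2)}

lemma mk_uvzVec_mem_Epts {l u v z : ℝ} (h : uvzVec u v z ≠ 0) :
    mk ℝ _ h ∈ Epts l ↔ cubicUVZ l u v z = 0 := by
  unfold Epts
  refine (mk_mem_setOf_rep (K := ℝ) (V := Fin 3 → ℝ)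
    (P := fun w => Vr l (w 0) (w 1) (w 2) = 0) (Vr_smul_eq_zero_iff l) h).trans ?_
  rw [Vr_uvzVec]
  exact div_eq_zero_iff.trans (or_iff_left four_ne_zero)

lemma mk_uvzVec_mem_oval {l u v z : ℝ} (h : uvzVec u v z ≠ 0) :
    mk ℝ _ h ∈ oval l ↔ cubicUVZ l u v z = 0 ∧ OvalCond l u v z := by
  refine and_congr (mk_uvzVec_mem_Epts h) ((mk_mem_setOf_rep (K := ℝ) (V := Fin 3 → ℝ)
    (P := fun w => OvalCond l (w 0 - w 1) (w 0 + w 1) (w 2)) (ovalCond_smul_iff l) h).trans ?_)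
  simp only [uvzVec, Matrix.cons_val]; ring_nf

lemma mk_uvzVec_mem_pseudoline {l u v z : ℝ} (h : uvzVec u v z ≠ 0) :
    mk ℝ _ h ∈ pseudoline l ↔ cubicUVZ l u v z = 0 ∧ PseudolineCond l u z := by
  refine and_congr (mk_uvzVec_mem_Epts h) ((mk_mem_setOf_rep (K := ℝ) (V := Fin 3 → ℝ)
    (P := fun w => PseudolineCond l (w 0 - w 1) (w 2)) (pseudolineCond_smul_iff l) h).trans ?_)
  simp only [uvzVec, Matrix.cons_val]; ring_nf

lemma mk_uvzVec_rep_two_ne_zero_iff {u v z : ℝ} (h : uvzVec u v z ≠ 0) :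
    (mk ℝ _ h).rep 2 ≠ 0 ↔ z ≠ 0 :=
  mk_mem_setOf_rep (P := fun w : Fin 3 → ℝ => w 2 ≠ 0) (fun c hc w => by simp [hc]) h

lemma reflRho_mk_uvzVec {u v z : ℝ} (h : uvzVec u v z ≠ 0) :
    ∃ h' : uvzVec u (-v) z ≠ 0, reflRho (mk ℝ _ h) = mk ℝ _ h' := by
  have hrefl : reflLin (uvzVec u v z) = uvzVec u (-v) z := by
    ext i; fin_cases i <;> simp [reflLin, uvzVec] <;> ring
  exact ⟨hrefl ▸ fun h0 => h (reflLin_injective (by rw [h0, map_zero])),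
    (map_mk _ _ _ _).trans (by simp only [hrefl])⟩

section Conditions

variable {l u v z : ℝ}

lemma eq_zero_of_cubicUVZ_eq_zero_of_z_eq_zero (hE : cubicUVZ l u v 0 = 0) : u = 0 := by
  have h : 2 * u * (u ^ 2 + v ^ 2) = 0 := by unfold cubicUVZ at hE; linear_combination hE
  rcases mul_eq_zero.1 h with h | h
  · linarith
  · nlinarith [sq_nonneg u, sq_nonneg v]

lemma OvalCond.eq_zero_of_z_eq_zero (h : OvalCond l u v 0) (hE : cubicUVZ l u v 0 = 0) :
    u = 0 ∧ v = 0 :=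
  ⟨eq_zero_of_cubicUVZ_eq_zero_of_z_eq_zero hE, by nlinarith [h.2, sq_nonneg v]⟩

lemma ovalCond_of_cubicUVZ_eq_zero (hl : l ≠ 0) (hz : z ≠ 0) (hE : cubicUVZ l u v z = 0)
    (h : l * u * z ≤ 0) : OvalCond l u v z := by
  refine ⟨h, ?_⟩
  rcases eq_or_ne u 0 with rfl | hu
  · have : v ^ 2 * (l * z) = 0 := by unfold cubicUVZ at hE; linear_combination -hE
    have hv : v ^ 2 = 0 := (mul_eq_zero.1 this).resolve_right (mul_ne_zero hl hz)
    rw [hv, mul_zero]; positivity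
  · have hu2 : 0 < u ^ 2 := by positivity
    have key : u ^ 2 * (2 * v ^ 2 + 2 * u ^ 2 + l * u * z - 4 * z ^ 2) ≤ 0 := by
      have : u ^ 2 * (2 * v ^ 2 + 2 * u ^ 2 + l * u * z - 4 * z ^ 2) = v ^ 2 * (l * u * z) := by
        unfold cubicUVZ at hE; linear_combination u * hE
      rw [this]
      exact mul_nonpos_of_nonneg_of_nonpos (sq_nonneg v) h
    have : 2 * v ^ 2 + 2 * u ^ 2 + l * u * z - 4 * z ^ 2 ≤ 0 :=
      nonpos_of_mul_nonpos_right key hu2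
    nlinarith [sq_nonneg (4 * u + l * z)]

lemma ovalCond_or_pseudolineCond (hl : l ≠ 0) (hE : cubicUVZ l u v z = 0) :
    OvalCond l u v z ∨ PseudolineCond l u z := by
  rcases eq_or_ne z 0 with rfl | hz
  · exact Or.inr ⟨by simp, by simp⟩
  rcases le_or_gt (l * u * z) 0 with h | h
  · exact Or.inl (ovalCond_of_cubicUVZ_eq_zero hl hz hE h)
  refine Or.inr ⟨h.le, ?_⟩
  have key : l * u * z * (l * (2 * u * z - l * z ^ 2) * (2 * u ^ 2 + l * u * z - 4 * z ^ 2)) =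
      -(v * l * z * (2 * u - l * z)) ^ 2 := by
    unfold cubicUVZ at hE
    linear_combination (l ^ 2 * z ^ 2 * (2 * u - l * z)) * hE
  nlinarith [sq_nonneg (v * l * z * (2 * u - l * z))]

lemma not_ovalCond_and_pseudolineCond (hl : l ≠ 0) (hne : ¬(u = 0 ∧ v = 0 ∧ z = 0))
    (hE : cubicUVZ l u v z = 0) : ¬(OvalCond l u v z ∧ PseudolineCond l u z) := by
  rintro ⟨hA, hB⟩
  rcases eq_or_ne z 0 with rfl | hz
  · obtain ⟨hu, hv⟩ := hA.eq_zero_of_z_eq_zero hE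
    exact hne ⟨hu, hv, rfl⟩
  obtain rfl : u = 0 := by simpa [hl, hz] using le_antisymm hA.1 hB.1
  have hB2 := hB.2
  have : 0 < l ^ 2 * z ^ 4 := by positivity
  nlinarith

end Conditions

lemma isClosed_Epts (l : ℝ) : IsClosed (Epts l) :=
  isClosed_setOf_rep (P := fun w => Vr l (w 0) (w 1) (w 2) = 0) (Vr_smul_eq_zero_iff l)
    (isClosed_eq (by unfold Vr; fun_prop) continuous_const)

lemma isClosed_oval (l : ℝ) : IsClosed (oval l) :=
  (isClosed_Epts l).inter <| isClosed_setOf_rep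
    (P := fun w => OvalCond l (w 0 - w 1) (w 0 + w 1) (w 2)) (ovalCond_smul_iff l) <| by
      simp only [OvalCond, ofPred_and]
      exact (isClosed_le (by fun_prop) continuous_const).inter
        (isClosed_le (by fun_prop) (by fun_prop))

lemma isClosed_pseudoline (l : ℝ) : IsClosed (pseudoline l) :=
  (isClosed_Epts l).inter <| isClosed_setOf_rep
    (P := fun w => PseudolineCond l (w 0 - w 1) (w 2)) (pseudolineCond_smul_iff l) <| by
      simp only [PseudolineCond, ofPred_and]
      exact (isClosed_le continuous_const (by fun_prop)).inter
        (isClosed_le (by fun_prop) continuous_const)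

section Sets

variable {l : ℝ}

lemma Epts_eq_oval_union_pseudoline (hl : l ≠ 0) : Epts l = oval l ∪ pseudoline l := by
  ext p
  obtain ⟨u, v, z, h, rfl⟩ := exists_eq_mk_uvzVec p
  rw [mem_union, mk_uvzVec_mem_Epts, mk_uvzVec_mem_oval, mk_uvzVec_mem_pseudoline]
  constructor
  · intro hE
    exact (ovalCond_or_pseudolineCond hl hE).imp (⟨hE, ·⟩) (⟨hE, ·⟩)
  · rintro (⟨hE, -⟩ | ⟨hE, -⟩) <;> exact hE

lemma disjoint_oval_pseudoline (hl : l ≠ 0) : Disjoint (oval l) (pseudoline l) := by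
  refine disjoint_left.2 fun p hA hB => ?_
  obtain ⟨u, v, z, h, rfl⟩ := exists_eq_mk_uvzVec p
  rw [mk_uvzVec_mem_oval] at hA
  rw [mk_uvzVec_mem_pseudoline] at hB
  exact not_ovalCond_and_pseudolineCond hl (uvzVec_eq_zero_iff.not.1 h) hA.1 ⟨hA.2, hB.2⟩

lemma oval_subset_rep_two_ne_zero (l : ℝ) : oval l ⊆ {p | p.rep 2 ≠ 0} := by
  intro p hp
  obtain ⟨u, v, z, h, rfl⟩ := exists_eq_mk_uvzVec p
  rw [mk_uvzVec_mem_oval] at hp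
  change _ ≠ 0
  rw [mk_uvzVec_rep_two_ne_zero_iff]
  rintro rfl
  obtain ⟨rfl, rfl⟩ := hp.2.eq_zero_of_z_eq_zero hp.1
  exact h (uvzVec_eq_zero_iff.2 ⟨rfl, rfl, rfl⟩)

lemma oval_nonempty (l : ℝ) : (oval l).Nonempty :=
  ⟨mk ℝ (uvzVec 0 0 1) (uvzVec_ne_zero_of_ne_zero one_ne_zero), by
    rw [mk_uvzVec_mem_oval]
    exact ⟨by simp [cubicUVZ], by simp, by simp; positivity⟩⟩

lemma exists_mem_pseudoline_rep_two_eq_zero (l : ℝ) : ∃ p ∈ pseudoline l, p.rep 2 = 0 := by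
  have h : uvzVec 0 1 0 ≠ 0 := fun h => one_ne_zero (uvzVec_eq_zero_iff.1 h).2.1
  refine ⟨mk ℝ _ h, (mk_uvzVec_mem_pseudoline h).2 ⟨by simp [cubicUVZ], by simp, by simp⟩, ?_⟩
  exact not_not.1 fun h' => (mk_uvzVec_rep_two_ne_zero_iff h).1 h' rfl

lemma reflRho_mem_oval {p : ℝP²} (hp : p ∈ oval l) : reflRho p ∈ oval l := by
  obtain ⟨u, v, z, h, rfl⟩ := exists_eq_mk_uvzVec p
  obtain ⟨h', hrefl⟩ := reflRho_mk_uvzVec h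
  rw [hrefl, mk_uvzVec_mem_oval]
  rw [mk_uvzVec_mem_oval] at hp
  simpa [cubicUVZ, OvalCond] using hp

lemma reflRho_mem_pseudoline {p : ℝP²} (hp : p ∈ pseudoline l) : reflRho p ∈ pseudoline l := by
  obtain ⟨u, v, z, h, rfl⟩ := exists_eq_mk_uvzVec p
  obtain ⟨h', hrefl⟩ := reflRho_mk_uvzVec h
  rw [hrefl, mk_uvzVec_mem_pseudoline]
  rw [mk_uvzVec_mem_pseudoline] at hp
  simpa [cubicUVZ] using hp

end Sets

def quadQ (l s : ℝ) : ℝ := l ^ 2 * (2 * s ^ 2 + s) - 4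

lemma cubicUVZ_param (l s v z : ℝ) :
    cubicUVZ l (l * s * z) v z = l * z * (z ^ 2 * (s * quadQ l s) - v ^ 2 * (1 - 2 * s)) := by
  unfold cubicUVZ quadQ; ring

/-- The point `(u, v, z) = (λs, σ √(s Q(s) / (1 - 2s)), 1)`, rescaled by `√|1 - 2s|` so that it
stays finite through the point at infinity `s = 1/2`. -/
noncomputable def curveVec (l σ s : ℝ) : Fin 3 → ℝ :=
  uvzVec (l * s * √|1 - 2 * s|) (σ * √|s * quadQ l s|) √|1 - 2 * s|

section Curve

variable {l σ s : ℝ}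

lemma continuous_curveVec (l σ : ℝ) : Continuous (curveVec l σ) := by
  unfold curveVec uvzVec quadQ
  fun_prop

lemma curveVec_ne_zero (hσ : σ ≠ 0) (h : 1 - 2 * s ≠ 0 ∨ s * quadQ l s ≠ 0) :
    curveVec l σ s ≠ 0 := by
  intro h0
  obtain ⟨-, hv, hz⟩ := uvzVec_eq_zero_iff.1 h0
  simp only [Real.sqrt_eq_zero', abs_nonpos_iff, mul_eq_zero, hσ, false_or] at hv hz
  exact h.elim (· hz) (· (mul_eq_zero.2 hv))

lemma curveVec_of_mul_quadQ_eq_zero (h : s * quadQ l s = 0) (σ' : ℝ) :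
    curveVec l σ s = curveVec l σ' s := by
  simp [curveVec, h]

lemma abs_mul_eq_abs_mul_of_mul_nonneg {a b : ℝ} (h : 0 ≤ a * b) : |a| * b = |b| * a := by
  rcases le_total 0 a with ha | ha <;> rcases le_total 0 b with hb | hb <;>
    simp only [abs_of_nonneg, abs_of_nonpos, ha, hb] <;> nlinarith

lemma cubicUVZ_curveVec (hσ : σ ^ 2 = 1) (h : 0 ≤ (1 - 2 * s) * (s * quadQ l s)) :
    cubicUVZ l (l * s * √|1 - 2 * s|) (σ * √|s * quadQ l s|) √|1 - 2 * s| = 0 := by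
  rw [cubicUVZ_param, mul_pow, hσ, one_mul, Real.sq_sqrt (abs_nonneg _),
    Real.sq_sqrt (abs_nonneg _), abs_mul_eq_abs_mul_of_mul_nonneg h, sub_self, mul_zero]

lemma isPreconnected_projImage_curveVec_union {I : Set ℝ} (hI : IsPreconnected I)
    (hne : ∀ σ : ℝ, σ ≠ 0 → ∀ s ∈ I, curveVec l σ s ≠ 0) {s₀ : ℝ} (hs₀ : s₀ ∈ I)
    (h₀ : s₀ * quadQ l s₀ = 0) :
    IsPreconnected (projImage (curveVec l 1) I ∪ projImage (curveVec l (-1)) I) := by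
  have hcont (σ : ℝ) := (continuous_curveVec l σ).continuousOn (s := I)
  refine (hI.projImage (hcont 1) (hne 1 one_ne_zero)).union
    (mk ℝ (curveVec l 1 s₀) (hne 1 one_ne_zero s₀ hs₀)) ⟨s₀, hs₀, _, rfl⟩
    ⟨s₀, hs₀, hne (-1) (by norm_num) s₀ hs₀, (mk_eq_mk_iff' _ _ _ _ _).2 ⟨1, ?_⟩⟩
    (hI.projImage (hcont (-1)) (hne (-1) (by norm_num)))
  rw [one_smul, curveVec_of_mul_quadQ_eq_zero h₀]

def ovalParams (l : ℝ) : Set ℝ := {s | s ≤ 0 ∧ quadQ l s ≤ 0}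

def pseudolineParams (l : ℝ) : Set ℝ := {s | 0 ≤ s ∧ 0 ≤ (1 - 2 * s) * quadQ l s}

lemma projImage_curveVec_subset_oval (hl : l ≠ 0) (hσ : σ ^ 2 = 1) :
    projImage (curveVec l σ) (ovalParams l) ⊆ oval l := by
  rintro _ ⟨s, ⟨hs, hQ⟩, h, rfl⟩
  have hE := cubicUVZ_curveVec hσ
    (mul_nonneg (by linarith) (mul_nonneg_of_nonpos_of_nonpos hs hQ))
  have hα : √|1 - 2 * s| ≠ 0 := by
    rw [Real.sqrt_ne_zero', abs_pos]; linarith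
  refine (mk_uvzVec_mem_oval h).2 ⟨hE, ovalCond_of_cubicUVZ_eq_zero hl hα hE ?_⟩
  rw [show l * (l * s * √|1 - 2 * s|) * √|1 - 2 * s| = s * (l * √|1 - 2 * s|) ^ 2 by ring]
  exact mul_nonpos_of_nonpos_of_nonneg hs (sq_nonneg _)

lemma projImage_curveVec_subset_pseudoline (hσ : σ ^ 2 = 1) :
    projImage (curveVec l σ) (pseudolineParams l) ⊆ pseudoline l := by
  rintro _ ⟨s, ⟨hs, hQ⟩, h, rfl⟩
  refine (mk_uvzVec_mem_pseudoline h).2 ⟨cubicUVZ_curveVec hσ ?_, ?_, ?_⟩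
  · rw [show (1 - 2 * s) * (s * quadQ l s) = s * ((1 - 2 * s) * quadQ l s) by ring]
    exact mul_nonneg hs hQ
  · rw [show l * (l * s * √|1 - 2 * s|) * √|1 - 2 * s| = s * (l * √|1 - 2 * s|) ^ 2 by ring]
    exact mul_nonneg hs (sq_nonneg _)
  · set α := √|1 - 2 * s|
    rw [show l * (2 * (l * s * α) * α - l * α ^ 2) * (2 * (l * s * α) ^ 2 + l * (l * s * α) * α -
        4 * α ^ 2) = -((l * α ^ 2) ^ 2 * ((1 - 2 * s) * quadQ l s)) by unfold quadQ; ring]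
    exact neg_nonpos.2 (mul_nonneg (sq_nonneg _) hQ)

lemma exists_mk_uvzVec_eq_chart {u v z : ℝ} (hl : l ≠ 0) (hz : z ≠ 0) (h : uvzVec u v z ≠ 0) :
    ∃ s t, mk ℝ _ h = mk ℝ (uvzVec (l * s) t 1) (uvzVec_ne_zero_of_ne_zero one_ne_zero) := by
  refine ⟨u / (l * z), v / z, (mk_eq_mk_iff' _ _ _ _ _).2 ⟨z, ?_⟩⟩
  rw [smul_uvzVec]
  congr 1 <;> field_simp

lemma cubicUVZ_chart_eq_zero_iff (hl : l ≠ 0) (t : ℝ) :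
    cubicUVZ l (l * s) t 1 = 0 ↔ t ^ 2 * (1 - 2 * s) = s * quadQ l s := by
  have := cubicUVZ_param l s t 1
  rw [mul_one] at this
  rw [this, mul_one, one_pow, one_mul, mul_eq_zero, sub_eq_zero, or_iff_right hl, eq_comm]

lemma mk_chart_mem_projImage {I : Set ℝ} {t : ℝ} (hs : s ∈ I)
    (hE : t ^ 2 * (1 - 2 * s) = s * quadQ l s) (h2s : 1 - 2 * s ≠ 0) :
    mk ℝ (uvzVec (l * s) t 1) (uvzVec_ne_zero_of_ne_zero one_ne_zero) ∈
      projImage (curveVec l 1) I ∪ projImage (curveVec l (-1)) I := by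
  have hβ : √|s * quadQ l s| = |t| * √|1 - 2 * s| := by
    rw [← hE, abs_mul, abs_of_nonneg (sq_nonneg t), Real.sqrt_mul (sq_nonneg t),
      Real.sqrt_sq_eq_abs]
  have hmem (σ : ℝ) (hσ0 : σ ≠ 0) (hσ : σ * |t| = t) :
      mk ℝ (uvzVec (l * s) t 1) (uvzVec_ne_zero_of_ne_zero one_ne_zero) ∈
        projImage (curveVec l σ) I := by
    refine ⟨s, hs, curveVec_ne_zero hσ0 (Or.inl h2s), (mk_eq_mk_iff' _ _ _ _ _).2
      ⟨√|1 - 2 * s|, ?_⟩⟩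
    rw [smul_uvzVec, curveVec, hβ, ← mul_assoc σ, hσ]
    congr 1 <;> ring
  rcases le_total 0 t with ht | ht
  · exact Or.inl (hmem 1 one_ne_zero (by rw [one_mul, abs_of_nonneg ht]))
  · exact Or.inr (hmem (-1) (by norm_num) (by rw [abs_of_nonpos ht]; ring))

lemma mk_uvzVec_infinity_mem_projImage (hl4 : l ^ 2 ≠ 4) {v : ℝ} (h : uvzVec 0 v 0 ≠ 0) :
    mk ℝ _ h ∈ projImage (curveVec l 1) (pseudolineParams l) := by
  have hv : v ≠ 0 := fun hv => h (uvzVec_eq_zero_iff.2 ⟨rfl, hv, rfl⟩)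
  have hβ : √|1 / 2 * quadQ l (1 / 2)| ≠ 0 := by
    rw [Real.sqrt_ne_zero', abs_pos]
    norm_num [quadQ]
    exact sub_ne_zero.2 hl4
  refine ⟨1 / 2, ⟨by norm_num, by norm_num⟩, curveVec_ne_zero one_ne_zero (Or.inr ?_),
    (mk_eq_mk_iff' _ _ _ _ _).2 ⟨√|1 / 2 * quadQ l (1 / 2)| / v, ?_⟩⟩
  · exact fun h0 => hβ (by rw [h0, abs_zero, Real.sqrt_zero])
  · rw [smul_uvzVec, curveVec]
    norm_num
    field_simp

end Curve

section Params

variable {l : ℝ}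

lemma exists_quadQ_eq (hl : l ≠ 0) :
    ∃ r, 0 < r ∧ ∀ s, quadQ l s = 2 * l ^ 2 * (s - r) * (s + r + 1 / 2) := by
  have hl2 : 0 < l ^ 2 := by positivity
  set d := √(1 + 32 / l ^ 2)
  have hd : d ^ 2 = 1 + 32 / l ^ 2 := Real.sq_sqrt (by positivity)
  have hd1 : 1 < d := by
    rw [show (1 : ℝ) = √1 from Real.sqrt_one.symm]
    exact Real.sqrt_lt_sqrt zero_le_one (by simp; positivity)
  refine ⟨(d - 1) / 4, by linarith, fun s => ?_⟩
  have : l ^ 2 * d ^ 2 = l ^ 2 + 32 := by rw [hd]; field_simp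
  unfold quadQ
  linear_combination (1 / 8 : ℝ) * this

lemma isPreconnected_ovalParams (hl : l ≠ 0) : IsPreconnected (ovalParams l) := by
  obtain ⟨r, hr, hQ⟩ := exists_quadQ_eq hl
  have hl2 : 0 < 2 * l ^ 2 := by positivity
  convert isPreconnected_Icc (a := -r - 1 / 2) (b := 0) using 1
  ext s
  simp only [ovalParams, mem_ofPred_eq, mem_Icc, hQ]
  constructor
  · rintro ⟨hs, h⟩
    refine ⟨?_, hs⟩
    by_contra! hlt
    nlinarith [mul_pos (mul_pos hl2 (by linarith : 0 < r - s))
      (by linarith : 0 < -(s + r + 1 / 2))]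
  · rintro ⟨h₁, h₂⟩
    exact ⟨h₂, mul_nonpos_of_nonpos_of_nonneg
      (mul_nonpos_of_nonneg_of_nonpos hl2.le (by linarith)) (by linarith)⟩

lemma isPreconnected_pseudolineParams (hl : l ≠ 0) : IsPreconnected (pseudolineParams l) := by
  obtain ⟨r, hr, hQ⟩ := exists_quadQ_eq hl
  have hl2 : 0 < 2 * l ^ 2 := by positivity
  convert isPreconnected_uIcc (a := r) (b := 1 / 2) using 1
  ext s
  simp only [pseudolineParams, mem_ofPred_eq, mem_uIcc, hQ]
  constructor
  · rintro ⟨hs, h⟩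
    have h' : 0 ≤ (1 - 2 * s) * (s - r) := by
      have hpos : 0 < 2 * l ^ 2 * (s + r + 1 / 2) := mul_pos hl2 (by linarith)
      nlinarith
    rcases le_total r (1 / 2) with hr' | hr'
    · left; constructor <;> by_contra! <;> nlinarith
    · right; constructor <;> by_contra! <;> nlinarith
  · intro h
    have hs : 0 ≤ s := by rcases h with h | h <;> linarith [h.1, h.2]
    refine ⟨hs, ?_⟩
    rw [show (1 - 2 * s) * (2 * l ^ 2 * (s - r) * (s + r + 1 / 2)) =
      2 * l ^ 2 * (s + r + 1 / 2) * ((1 - 2 * s) * (s - r)) by ring]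
    refine mul_nonneg (mul_nonneg hl2.le (by linarith)) ?_
    rcases h with ⟨h₁, h₂⟩ | ⟨h₁, h₂⟩
    · exact mul_nonneg (by linarith) (by linarith)
    · exact mul_nonneg_of_nonpos_of_nonpos (by linarith) (by linarith)

end Params

section Components

variable {l : ℝ}

lemma oval_subset_projImage (hl : l ≠ 0) :
    oval l ⊆
      projImage (curveVec l 1) (ovalParams l) ∪ projImage (curveVec l (-1)) (ovalParams l) := by
  intro p hp
  have hz := oval_subset_rep_two_ne_zero l hp
  obtain ⟨u, v, z, h, rfl⟩ := exists_eq_mk_uvzVec p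
  obtain ⟨s, t, hst⟩ := exists_mk_uvzVec_eq_chart hl ((mk_uvzVec_rep_two_ne_zero_iff h).1 hz) h
  rw [hst, mk_uvzVec_mem_oval, cubicUVZ_chart_eq_zero_iff hl] at hp
  rw [hst]
  obtain ⟨hE, hsl, -⟩ := hp
  have hs : s ≤ 0 := by nlinarith [sq_pos_of_ne_zero hl]
  have hQ : quadQ l s ≤ 0 := by
    rcases hs.lt_or_eq with hs | rfl
    · nlinarith [sq_nonneg t]
    · norm_num [quadQ]
  exact mk_chart_mem_projImage ⟨hs, hQ⟩ hE (by linarith)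

lemma pseudoline_subset_projImage (hl : l ≠ 0) (hl4 : l ^ 2 ≠ 4) :
    pseudoline l ⊆
      projImage (curveVec l 1) (pseudolineParams l) ∪
        projImage (curveVec l (-1)) (pseudolineParams l) := by
  intro p hp
  obtain ⟨u, v, z, h, rfl⟩ := exists_eq_mk_uvzVec p
  rcases eq_or_ne z 0 with rfl | hz
  · obtain rfl := eq_zero_of_cubicUVZ_eq_zero_of_z_eq_zero ((mk_uvzVec_mem_pseudoline h).1 hp).1
    exact Or.inl (mk_uvzVec_infinity_mem_projImage hl4 h)
  obtain ⟨s, t, hst⟩ := exists_mk_uvzVec_eq_chart hl hz h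
  rw [hst, mk_uvzVec_mem_pseudoline, cubicUVZ_chart_eq_zero_iff hl] at hp
  rw [hst]
  obtain ⟨hE, hs, hQ⟩ := hp
  have hl2 : 0 < l ^ 2 := by positivity
  have h2s : 1 - 2 * s ≠ 0 := by
    intro h2s
    obtain rfl : s = 1 / 2 := by linarith
    rw [h2s, mul_zero] at hE
    norm_num [quadQ] at hE
    exact hl4 (by linarith)
  refine mk_chart_mem_projImage ⟨by nlinarith, ?_⟩ hE h2s
  rw [show l * (2 * (l * s) * 1 - l * 1 ^ 2) * (2 * (l * s) ^ 2 + l * (l * s) * 1 - 4 * 1 ^ 2) =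
    -(l ^ 2 * ((1 - 2 * s) * quadQ l s)) by unfold quadQ; ring] at hQ
  nlinarith

lemma isPreconnected_oval (hl : l ≠ 0) : IsPreconnected (oval l) := by
  rw [(oval_subset_projImage hl).antisymm (union_subset
    (projImage_curveVec_subset_oval hl (by norm_num))
    (projImage_curveVec_subset_oval hl (by norm_num)))]
  refine isPreconnected_projImage_curveVec_union (isPreconnected_ovalParams hl)
    (fun σ hσ s hs => curveVec_ne_zero hσ (Or.inl (by linarith [hs.1])))
    (s₀ := 0) ⟨le_rfl, by norm_num [quadQ]⟩ (zero_mul _)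

lemma isPreconnected_pseudoline (hl : l ≠ 0) (hl4 : l ^ 2 ≠ 4) :
    IsPreconnected (pseudoline l) := by
  rw [(pseudoline_subset_projImage hl hl4).antisymm (union_subset
    (projImage_curveVec_subset_pseudoline (by norm_num))
    (projImage_curveVec_subset_pseudoline (by norm_num)))]
  obtain ⟨r, hr, hQ⟩ := exists_quadQ_eq hl
  refine isPreconnected_projImage_curveVec_union (isPreconnected_pseudolineParams hl)
    (fun σ hσ s hs => curveVec_ne_zero hσ ?_) (s₀ := r) ⟨hr.le, by simp [hQ]⟩ (by simp [hQ])
  by_contra! h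
  obtain rfl : s = 1 / 2 := by linarith [h.1]
  norm_num [quadQ] at h
  exact hl4 (by linarith)

end Components

/-- For real λ ∉ {-2, 0, 2}, the real points of `E_λ` have exactly two connected
components, each invariant under the reflection `[x:y:z] ↦ [-y:-x:z]`, and exactly one
of the two components is contained in the affine chart `z ≠ 0`. -/
theorem E_lambda_two_components (l : ℝ) (hm2 : l ≠ -2) (h0 : l ≠ 0) (h2 : l ≠ 2) :
    ∃ C₁ C₂ : Set (Projectivization ℝ (Fin 3 → ℝ)),
      C₁ ≠ C₂ ∧
      (∀ p ∈ Epts l, connectedComponentIn (Epts l) p = C₁ ∨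
        connectedComponentIn (Epts l) p = C₂) ∧
      (∃ p ∈ Epts l, connectedComponentIn (Epts l) p = C₁) ∧
      (∃ p ∈ Epts l, connectedComponentIn (Epts l) p = C₂) ∧
      (∀ p ∈ Epts l, reflRho p ∈ connectedComponentIn (Epts l) p) ∧
      C₁ ⊆ {p : Projectivization ℝ (Fin 3 → ℝ) | p.rep 2 ≠ 0} ∧
      ¬ C₂ ⊆ {p : Projectivization ℝ (Fin 3 → ℝ) | p.rep 2 ≠ 0} := by
  have hl4 : l ^ 2 ≠ 4 := fun h => by
    rcases sq_eq_sq_iff_eq_or_eq_neg.1 (h.trans (by norm_num : (4 : ℝ) = 2 ^ 2)) with h' | h'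
    exacts [h2 h', hm2 h']
  have hE := Epts_eq_oval_union_pseudoline h0
  have hd := disjoint_oval_pseudoline h0
  have hA {p} (hp : p ∈ oval l) : connectedComponentIn (Epts l) p = oval l :=
    connectedComponentIn_eq_of_isClosed hE hd (isClosed_oval l) (isClosed_pseudoline l)
      (isPreconnected_oval h0) hp
  have hB {p} (hp : p ∈ pseudoline l) : connectedComponentIn (Epts l) p = pseudoline l :=
    connectedComponentIn_eq_of_isClosed (hE.trans (union_comm _ _)) hd.symm
      (isClosed_pseudoline l) (isClosed_oval l) (isPreconnected_pseudoline h0 hl4) hp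
  obtain ⟨p₀, hp₀⟩ := oval_nonempty l
  obtain ⟨p₁, hp₁, hp₁z⟩ := exists_mem_pseudoline_rep_two_eq_zero l
  refine ⟨oval l, pseudoline l, fun h => (oval_subset_rep_two_ne_zero l (h ▸ hp₁)) hp₁z,
    fun p hp => ?_, ⟨p₀, hp₀.1, hA hp₀⟩, ⟨p₁, hp₁.1, hB hp₁⟩, fun p hp => ?_,
    oval_subset_rep_two_ne_zero l, fun h => h hp₁ hp₁z⟩
  · rw [hE] at hp
    exact hp.imp hA hB
  · rw [hE] at hp
    rcases hp with hp | hp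
    · exact (hA hp).symm ▸ reflRho_mem_oval hp
    · exact (hB hp).symm ▸ reflRho_mem_pseudoline hp
end

section
/- The map T preserves the diagonal line {x = y} and acts there by the Möbius map x ↦ (1+x)/(1+2x): for every x ∈ ℝ at which T is defined at (x,x) and with 1+2x ≠ 0, one has T(x,x) = ((1+x)/(1+2x), (1+x)/(1+2x)). -/
theorem tB_self (x : ℝ) : tB x x = 0 := by
  unfold tB; ring

theorem tDen_self (x : ℝ) : tDen x x = 4 * x ^ 4 * (1 + 2 * x) := by
  unfold tDen; ring

theorem T_self (x : ℝ) : T (x, x) = (2 * tA x x * x ^ 3, 2 * tA x x * x ^ 3) := by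
  simp only [T, tB_self, Prod.mk.injEq]
  constructor <;> ring

theorem two_mul_tA_self_mul_pow_three {x : ℝ} (hdef : tDen x x ≠ 0) :
    2 * tA x x * x ^ 3 = (1 + x) / (1 + 2 * x) := by
  rw [tDen_self] at hdef
  obtain ⟨hx4, h2x⟩ := mul_ne_zero_iff.mp hdef
  have hx : x ≠ 0 := by simpa using hx4
  rw [tA, tDen_self]
  field_simp
  ring

theorem T_on_diagonal_general (x : ℝ) (hdef : tDen x x ≠ 0) :
    T (x, x) = ((1 + x) / (1 + 2 * x), (1 + x) / (1 + 2 * x)) := by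
  rw [T_self, two_mul_tA_self_mul_pow_three hdef]

/-- `T` preserves the diagonal line `x = y`, acting by `x ↦ (1+x)/(1+2x)`. -/
theorem T_on_diagonal (x : ℝ) (hdef : tDen x x ≠ 0) (h : 1 + 2 * x ≠ 0) :
    T (x, x) = ((1 + x) / (1 + 2 * x), (1 + x) / (1 + 2 * x)) :=
  T_on_diagonal_general x hdef
end

section
/- The Möbius map g(x) = (1+x)/(1+2x) has exactly the two fixed points x = 1/√2 and x = −1/√2 among real numbers with 1+2x ≠ 0; the fixed point 1/√2 is globally attracting in the following sense: if x₀ ∈ ℝ with x₀ ≠ −1/√2 and the orbit x_{n+1} = g(x_n) is defined for all n ≥ 0 (i.e. 1 + 2x_n ≠ 0 for all n), then x_n converges to 1/√2 as n → ∞. -/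
open Filter Topology

/-!
The fixed points `±c` of `g(x) = (1 + x)/(1 + 2x)` are the roots of `2c² = 1`, and the cross-ratio
coordinate `y = (x - c)/(x + c)` linearises `g`: it multiplies `y` by `(1 - 2c)/(1 + 2c)`, which has
absolute value `< 1` for `c = 1/√2`. Along an orbit avoiding `-c` the coordinate therefore tends
to `0`, i.e. the orbit tends to `c`.
-/

noncomputable def moebius (x : ℝ) : ℝ := (1 + x) / (1 + 2 * x)

lemma one_add_two_mul_ne_zero_of_two_mul_sq_eq_one {c : ℝ} (hc : 2 * c ^ 2 = 1) :
    1 + 2 * c ≠ 0 := by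
  intro h
  nlinarith

lemma moebius_eq_self_iff {x : ℝ} (hx : 1 + 2 * x ≠ 0) : moebius x = x ↔ 2 * x ^ 2 = 1 := by
  rw [moebius, div_eq_iff hx]
  constructor <;> intro h <;> linear_combination -h

lemma two_mul_sq_eq_one_iff {x : ℝ} : 2 * x ^ 2 = 1 ↔ x = 1 / √2 ∨ x = -(1 / √2) := by
  have hsq : (1 / √2) ^ 2 = 1 / 2 := by rw [div_pow, one_pow, Real.sq_sqrt zero_le_two]
  rw [← sq_eq_sq_iff_eq_or_eq_neg, hsq]
  constructor <;> intro h <;> linarith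

lemma moebius_sub_of_two_mul_sq_eq_one {c x : ℝ} (hc : 2 * c ^ 2 = 1) (hx : 1 + 2 * x ≠ 0) :
    moebius x - c = (1 - 2 * c) * (x - c) / (1 + 2 * x) := by
  rw [moebius, eq_div_iff hx, sub_mul, div_mul_cancel₀ _ hx]
  linear_combination -hc

lemma moebius_add_of_two_mul_sq_eq_one {c x : ℝ} (hc : 2 * c ^ 2 = 1) (hx : 1 + 2 * x ≠ 0) :
    moebius x + c = (1 + 2 * c) * (x + c) / (1 + 2 * x) := by
  simpa using moebius_sub_of_two_mul_sq_eq_one (c := -c) (by linear_combination hc) hx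

lemma moebius_add_ne_zero {c x : ℝ} (hc : 2 * c ^ 2 = 1) (hx : 1 + 2 * x ≠ 0)
    (hxc : x + c ≠ 0) : moebius x + c ≠ 0 := by
  rw [moebius_add_of_two_mul_sq_eq_one hc hx]
  exact div_ne_zero (mul_ne_zero (one_add_two_mul_ne_zero_of_two_mul_sq_eq_one hc) hxc) hx

lemma moebius_cross_ratio {c x : ℝ} (hc : 2 * c ^ 2 = 1) (hx : 1 + 2 * x ≠ 0)
    (hxc : x + c ≠ 0) :
    (moebius x - c) / (moebius x + c) = (1 - 2 * c) / (1 + 2 * c) * ((x - c) / (x + c)) := by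
  have hc' := one_add_two_mul_ne_zero_of_two_mul_sq_eq_one hc
  rw [moebius_sub_of_two_mul_sq_eq_one hc hx, moebius_add_of_two_mul_sq_eq_one hc hx]
  field_simp

lemma abs_one_sub_div_one_add_lt_one {a : ℝ} (ha : 0 < a) : |(1 - a) / (1 + a)| < 1 := by
  rw [abs_div, abs_of_pos (by linarith : 0 < 1 + a), div_lt_one (by linarith), abs_sub_lt_iff]
  constructor <;> linarith

lemma tendsto_of_cross_ratio_tendsto_zero {α : Type*} {l : Filter α} {f : α → ℝ} {c : ℝ}
    (hc : c ≠ 0) (hf : ∀ a, f a + c ≠ 0)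
    (h : Tendsto (fun a ↦ (f a - c) / (f a + c)) l (𝓝 0)) : Tendsto f l (𝓝 c) := by
  have hinv : ∀ a, f a = c * (1 + (f a - c) / (f a + c)) / (1 - (f a - c) / (f a + c)) := by
    intro a
    have hf' := hf a
    have hden : 1 - (f a - c) / (f a + c) = 2 * c / (f a + c) := by field_simp; ring
    rw [hden]
    field_simp
    ring
  have hlim : Tendsto (fun a ↦ c * (1 + (f a - c) / (f a + c)) / (1 - (f a - c) / (f a + c))) l
      (𝓝 (c * (1 + 0) / (1 - 0))) :=
    (tendsto_const_nhds.mul (tendsto_const_nhds.add h)).div (tendsto_const_nhds.sub h)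
      (by norm_num)
  simp only [add_zero, sub_zero, mul_one, div_one] at hlim
  exact hlim.congr fun a ↦ (hinv a).symm

theorem tendsto_moebius_orbit {c : ℝ} (hc : 2 * c ^ 2 = 1) (hc0 : 0 < c) {x : ℕ → ℝ}
    (h0 : x 0 ≠ -c) (hd : ∀ n, 1 + 2 * x n ≠ 0) (hx : ∀ n, x (n + 1) = moebius (x n)) :
    Tendsto x atTop (𝓝 c) := by
  have hxc : ∀ n, x n + c ≠ 0 := by
    intro n
    induction n with
    | zero => exact fun h ↦ h0 (eq_neg_of_add_eq_zero_left h)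
    | succ n ih => exact hx n ▸ moebius_add_ne_zero hc (hd n) ih
  set k := (1 - 2 * c) / (1 + 2 * c)
  have hratio : ∀ n, (x n - c) / (x n + c) = k ^ n * ((x 0 - c) / (x 0 + c)) := by
    intro n
    induction n with
    | zero => simp
    | succ n ih => rw [hx n, moebius_cross_ratio hc (hd n) (hxc n), ih, pow_succ']; ring
  refine tendsto_of_cross_ratio_tendsto_zero hc0.ne' hxc ?_
  have hk := tendsto_pow_atTop_nhds_zero_of_abs_lt_one
    (abs_one_sub_div_one_add_lt_one (a := 2 * c) (by positivity))
  rw [show (fun n ↦ (x n - c) / (x n + c)) = _ from funext hratio]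
  simpa using hk.mul_const ((x 0 - c) / (x 0 + c))

/-- The Möbius map `g(x) = (1+x)/(1+2x)` has exactly the fixed points `±1/√2`, and the
fixed point `1/√2` attracts every orbit that is defined for all time and does not start
at `-1/√2`. -/
theorem moebius_fixed_points_and_attraction :
    ({x : ℝ | 1 + 2 * x ≠ 0 ∧ (1 + x) / (1 + 2 * x) = x} =
      {1 / Real.sqrt 2, -(1 / Real.sqrt 2)}) ∧
    ∀ x : ℕ → ℝ, x 0 ≠ -(1 / Real.sqrt 2) → (∀ n, 1 + 2 * x n ≠ 0) →
      (∀ n, x (n + 1) = (1 + x n) / (1 + 2 * x n)) →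
      Filter.Tendsto x Filter.atTop (nhds (1 / Real.sqrt 2)) := by
  refine ⟨Set.ext fun x ↦ ⟨fun ⟨hx, hfix⟩ ↦ ?_, fun hx ↦ ?_⟩, fun x h0 hd hx ↦ ?_⟩
  · exact two_mul_sq_eq_one_iff.mp ((moebius_eq_self_iff hx).mp hfix)
  · have hsq := two_mul_sq_eq_one_iff.mpr hx
    have hne := one_add_two_mul_ne_zero_of_two_mul_sq_eq_one hsq
    exact ⟨hne, (moebius_eq_self_iff hne).mpr hsq⟩
  · exact tendsto_moebius_orbit (two_mul_sq_eq_one_iff.mpr (Or.inl rfl)) (by positivity) h0 hd hx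
end

section
/- The level sets Ψ = ±2 each decompose as the union of a line and a circle: one has the polynomial identities (x−y)(x²+y²−1) − 2xy = (x−y−1)(x²+y²+x−y) and (x−y)(x²+y²−1) + 2xy = (x−y+1)(x²+y²−x+y) for all real x, y. Consequently, for (x,y) ∈ ℝ² with xy ≠ 0, Ψ(x,y) = 2 if and only if y = x − 1 or (x + 1/2)² + (y − 1/2)² = 1/2, and Ψ(x,y) = −2 if and only if y = x + 1 or (x − 1/2)² + (y + 1/2)² = 1/2. -/
section Factorizations

variable {R : Type*} [CommRing R] (x y : R)

theorem sub_mul_sq_add_sq_sub_one_sub_two_mul :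
    (x - y) * (x ^ 2 + y ^ 2 - 1) - 2 * (x * y) = (x - y - 1) * (x ^ 2 + y ^ 2 + x - y) := by
  ring

theorem sub_mul_sq_add_sq_sub_one_add_two_mul :
    (x - y) * (x ^ 2 + y ^ 2 - 1) + 2 * (x * y) = (x - y + 1) * (x ^ 2 + y ^ 2 - x + y) := by
  ring

end Factorizations

section LevelSets

variable {x y : ℝ}

theorem Psi_eq_iff (hxy : x * y ≠ 0) (c : ℝ) :
    Psi (x, y) = c ↔ (x - y) * (x ^ 2 + y ^ 2 - 1) - c * (x * y) = 0 := by
  rw [Psi, div_eq_iff hxy, sub_eq_zero]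

theorem sq_add_sq_add_sub_eq_zero_iff :
    x ^ 2 + y ^ 2 + x - y = 0 ↔ (x + 1 / 2) ^ 2 + (y - 1 / 2) ^ 2 = 1 / 2 := by
  rw [← sub_eq_zero (b := (1 / 2 : ℝ))]
  ring_nf

theorem sq_add_sq_sub_add_eq_zero_iff :
    x ^ 2 + y ^ 2 - x + y = 0 ↔ (x - 1 / 2) ^ 2 + (y + 1 / 2) ^ 2 = 1 / 2 := by
  rw [← sub_eq_zero (b := (1 / 2 : ℝ))]
  ring_nf

theorem Psi_eq_two_iff (hxy : x * y ≠ 0) :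
    Psi (x, y) = 2 ↔ y = x - 1 ∨ (x + 1 / 2) ^ 2 + (y - 1 / 2) ^ 2 = 1 / 2 := by
  rw [Psi_eq_iff hxy, sub_mul_sq_add_sq_sub_one_sub_two_mul, mul_eq_zero,
    sq_add_sq_add_sub_eq_zero_iff]
  exact or_congr_left ⟨fun h => by linarith, fun h => by linarith⟩

theorem Psi_eq_neg_two_iff (hxy : x * y ≠ 0) :
    Psi (x, y) = -2 ↔ y = x + 1 ∨ (x - 1 / 2) ^ 2 + (y + 1 / 2) ^ 2 = 1 / 2 := by
  rw [Psi_eq_iff hxy, neg_mul, sub_neg_eq_add, sub_mul_sq_add_sq_sub_one_add_two_mul,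
    mul_eq_zero, sq_add_sq_sub_add_eq_zero_iff]
  exact or_congr_left ⟨fun h => by linarith, fun h => by linarith⟩

end LevelSets

/-- The level sets `Ψ = ±2` each decompose as the union of a line and a circle. -/
theorem psi_level_sets_pm_two :
    (∀ x y : ℝ,
      (x - y) * (x ^ 2 + y ^ 2 - 1) - 2 * (x * y) = (x - y - 1) * (x ^ 2 + y ^ 2 + x - y)) ∧
    (∀ x y : ℝ,
      (x - y) * (x ^ 2 + y ^ 2 - 1) + 2 * (x * y) = (x - y + 1) * (x ^ 2 + y ^ 2 - x + y)) ∧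
    (∀ x y : ℝ, x * y ≠ 0 →
      (Psi (x, y) = 2 ↔ y = x - 1 ∨ (x + 1 / 2) ^ 2 + (y - 1 / 2) ^ 2 = 1 / 2)) ∧
    (∀ x y : ℝ, x * y ≠ 0 →
      (Psi (x, y) = -2 ↔ y = x + 1 ∨ (x - 1 / 2) ^ 2 + (y + 1 / 2) ^ 2 = 1 / 2)) :=
  ⟨sub_mul_sq_add_sq_sub_one_sub_two_mul, sub_mul_sq_add_sq_sub_one_add_two_mul,
    fun _ _ => Psi_eq_two_iff, fun _ _ => Psi_eq_neg_two_iff⟩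
end

section
/- For every nonzero x ∈ ℝ such that T is defined at (x,−x) and T is defined at T(x,−x), the point (u,v) = T(T(x,−x)) lies on the line {y = −x} (i.e. u + v = 0) if and only if x = (1/2)·√((1+√17)/2) or x = −(1/2)·√((1+√17)/2). Equivalently, the only nonzero real roots of the polynomial 32x¹⁰ − 6x⁶ + x⁴ − 2x² − 1 are x = ±(1/2)·√((1+√17)/2). -/
/- On the antidiagonal the denominator of `T` collapses to `4x²(1 + x²)`, so `T(x,-x)` is an explicit
rational point. Substituting it into `T` once more, the sum of the coordinates of `T²(x,-x)` is
`-16x⁸ (32x¹⁰ - 6x⁶ + x⁴ - 2x² - 1)` over a nonvanishing denominator. The polynomial factors as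
`(4x⁴ - x² - 1)(8x⁶ + 2x⁴ + x² + 1)`, the second factor is positive, and the quartic is a quadratic
in `x²` whose only nonnegative root is `(1 + √17)/8`. -/

lemma tDen_antidiagonal (x : ℝ) : tDen x (-x) = 4 * x ^ 2 * (1 + x ^ 2) := by
  simp only [tDen]; ring

lemma T_antidiagonal {x : ℝ} (hx : x ≠ 0) :
    T (x, -x) = (-(x ^ 2 * (2 * x ^ 2 + x + 1)) / (1 + x ^ 2),
      -(x ^ 2 * (2 * x ^ 2 - x + 1)) / (1 + x ^ 2)) := by
  have hden : tDen x (-x) ≠ 0 := by rw [tDen_antidiagonal]; positivity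
  simp only [T, tA, tB, Prod.mk.injEq]
  constructor <;> (field_simp; rw [tDen_antidiagonal]; ring)

lemma T_T_antidiagonal_fst_add_snd {x : ℝ} (hx : x ≠ 0) :
    (T (T (x, -x))).1 + (T (T (x, -x))).2 =
      -16 * x ^ 8 * (32 * x ^ 10 - 6 * x ^ 6 + x ^ 4 - 2 * x ^ 2 - 1) /
        ((1 + x ^ 2) ^ 4 * tDen (T (x, -x)).1 (T (x, -x)).2) := by
  rw [T_antidiagonal hx]
  simp only [T, tA, tB]
  field_simp
  ring

lemma decic_eq_zero_iff_quartic (x : ℝ) :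
    32 * x ^ 10 - 6 * x ^ 6 + x ^ 4 - 2 * x ^ 2 - 1 = 0 ↔ 4 * x ^ 4 - x ^ 2 - 1 = 0 := by
  have hpos : 0 < 8 * x ^ 6 + 2 * x ^ 4 + x ^ 2 + 1 := by positivity
  rw [show 32 * x ^ 10 - 6 * x ^ 6 + x ^ 4 - 2 * x ^ 2 - 1 =
      (4 * x ^ 4 - x ^ 2 - 1) * (8 * x ^ 6 + 2 * x ^ 4 + x ^ 2 + 1) by ring,
    mul_eq_zero, or_iff_left hpos.ne']

lemma quartic_eq_zero_iff (x : ℝ) : 4 * x ^ 4 - x ^ 2 - 1 = 0 ↔ x ^ 2 = (1 + √17) / 8 := by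
  have hs : √17 ^ 2 = 17 := Real.sq_sqrt (by norm_num)
  have hs1 : 1 < √17 := by nlinarith [Real.sqrt_nonneg 17]
  have hpos : 0 < 8 * x ^ 2 - 1 + √17 := by nlinarith [sq_nonneg x]
  rw [← mul_right_inj' (show (16 : ℝ) ≠ 0 by norm_num), mul_zero,
    show 16 * (4 * x ^ 4 - x ^ 2 - 1) = (8 * x ^ 2 - 1 - √17) * (8 * x ^ 2 - 1 + √17) by
      linear_combination hs,
    mul_eq_zero, or_iff_left hpos.ne']
  constructor <;> intro h <;> linarith

lemma sq_half_sqrt (a : ℝ) (ha : 0 ≤ a) : (1 / 2 * √(a / 2)) ^ 2 = a / 8 := by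
  rw [mul_pow, Real.sq_sqrt (by positivity)]; ring

lemma decic_eq_zero_iff (x : ℝ) :
    32 * x ^ 10 - 6 * x ^ 6 + x ^ 4 - 2 * x ^ 2 - 1 = 0 ↔
      x = 1 / 2 * √((1 + √17) / 2) ∨ x = -(1 / 2 * √((1 + √17) / 2)) := by
  rw [decic_eq_zero_iff_quartic, quartic_eq_zero_iff,
    ← sq_half_sqrt _ (by positivity), sq_eq_sq_iff_eq_or_eq_neg]

/-- For nonzero real `x`, the point `T²(x,-x)` lies on the line `y = -x` exactly when
`x = ±(1/2)√((1+√17)/2)`; equivalently, these are the only nonzero real roots of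
`32x¹⁰ - 6x⁶ + x⁴ - 2x² - 1`. -/
theorem T_squared_antidiagonal_return :
    (∀ x : ℝ, x ≠ 0 → tDen x (-x) ≠ 0 → tDen (T (x, -x)).1 (T (x, -x)).2 ≠ 0 →
      ((T (T (x, -x))).1 + (T (T (x, -x))).2 = 0 ↔
        x = 1 / 2 * Real.sqrt ((1 + Real.sqrt 17) / 2) ∨
        x = -(1 / 2 * Real.sqrt ((1 + Real.sqrt 17) / 2)))) ∧
    (∀ x : ℝ, x ≠ 0 →
      (32 * x ^ 10 - 6 * x ^ 6 + x ^ 4 - 2 * x ^ 2 - 1 = 0 ↔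
        x = 1 / 2 * Real.sqrt ((1 + Real.sqrt 17) / 2) ∨
        x = -(1 / 2 * Real.sqrt ((1 + Real.sqrt 17) / 2)))) := by
  refine ⟨fun x hx _ hden => ?_, fun x _ => decic_eq_zero_iff x⟩
  have hcoef : -16 * x ^ 8 ≠ 0 := mul_ne_zero (by norm_num) (pow_ne_zero 8 hx)
  rw [← decic_eq_zero_iff, T_T_antidiagonal_fst_add_snd hx, div_eq_zero_iff, mul_eq_zero,
    or_iff_right hcoef, or_iff_left (mul_ne_zero (by positivity) hden)]
end

section
/- Forward rigidity for dihedral octagons with symmetry lines through the vertices: suppose (x,y) ∈ ℝ² is such that P(x,y) is convex. Then x = y if and only if there exists a sequence (p_j)_{j≥0} of points of ℝ² with p_0 = (x,y) such that, for every j ≥ 0, T is defined at p_j, T(p_j) = p_{j+1}, and P(p_j) is convex. -/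
/-- The vertices of the octagon `P(x,y)` with 4-fold rotational symmetry. -/
def octVerts (x y : ℝ) : Fin 8 → ℝ × ℝ :=
  ![(1, 0), (x, y), (0, 1), (-y, x), (-1, 0), (-x, -y), (0, -1), (y, -x)]

/-- Cross product (2x2 determinant) of two planar vectors. -/
def cross2 (a b : ℝ × ℝ) : ℝ := a.1 * b.2 - a.2 * b.1

/-- The octagon `P(x,y)` is convex: each successive cross product is positive. -/
def ConvexOct (x y : ℝ) : Prop :=
  ∀ i : Fin 8,
    0 < cross2 (octVerts x y (i + 1) - octVerts x y i)
        (octVerts x y (i + 2) - octVerts x y (i + 1))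

theorem convexOct_iff (x y : ℝ) :
    ConvexOct x y ↔ 1 < x + y ∧ x ^ 2 + y ^ 2 < x + y := by
  constructor
  · intro h
    have h0 := h 0
    have h1 := h 1
    simp [octVerts, cross2] at h0 h1
    constructor <;> nlinarith
  · rintro ⟨h1, h2⟩ i
    fin_cases i <;> simp [octVerts, cross2] <;> nlinarith

theorem convexOct_diag_iff (t : ℝ) : ConvexOct t t ↔ 1 / 2 < t ∧ t < 1 := by
  rw [convexOct_iff]
  constructor <;> rintro ⟨h1, h2⟩ <;> constructor <;> nlinarith

def sumFactor (x y : ℝ) : ℝ :=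
  2 * x * y * (x + y) - (x - y) ^ 2 * (1 + 2 * (x + y) + (x ^ 2 + y ^ 2))

def diffFactor (x y : ℝ) : ℝ :=
  (x + y) + 2 * (x + y) ^ 2 + (x + y) * (x ^ 2 + y ^ 2) - 2 * x * y

theorem T_fst_add_snd (x y : ℝ) : (T (x, y)).1 + (T (x, y)).2 = tA x y * sumFactor x y := by
  simp only [T, tB, sumFactor]
  ring

theorem T_fst_sub_snd (x y : ℝ) :
    (T (x, y)).1 - (T (x, y)).2 = -(tA x y * (x - y) * diffFactor x y) := by
  simp only [T, tB, diffFactor]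
  ring

namespace ConvexOct

variable {x y : ℝ}

theorem pos (h : ConvexOct x y) : 0 < x ∧ 0 < y := by
  obtain ⟨h1, h2⟩ := (convexOct_iff x y).1 h
  constructor <;> nlinarith [sq_nonneg (x - 1), sq_nonneg (y - 1)]

theorem abs_sub_lt_one (h : ConvexOct x y) : |x - y| < 1 := by
  obtain ⟨h1, h2⟩ := (convexOct_iff x y).1 h
  rw [abs_lt]
  constructor <;> nlinarith [sq_nonneg (x + y - 1)]

theorem tDen_pos (h : ConvexOct x y) : 0 < tDen x y := by
  obtain ⟨h1, h2⟩ := (convexOct_iff x y).1 h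
  obtain ⟨hx, hy⟩ := h.pos
  refine mul_pos (by linarith) ?_
  nlinarith [sq_nonneg (x ^ 2 - y), sq_nonneg (y ^ 2 - x), mul_pos hx hy,
    mul_pos (mul_pos hx hy) (sub_pos.2 h1), sq_nonneg (x - y)]

theorem tA_pos (h : ConvexOct x y) : 0 < tA x y := by
  obtain ⟨hx, hy⟩ := h.pos
  exact div_pos (by positivity) h.tDen_pos

theorem two_mul_sumFactor_le_diffFactor (h : ConvexOct x y) :
    2 * sumFactor x y ≤ diffFactor x y := by
  obtain ⟨h1, h2⟩ := (convexOct_iff x y).1 h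
  simp only [sumFactor, diffFactor]
  nlinarith [sq_nonneg (x - y), sq_nonneg (x + y - 1),
    mul_nonneg (sq_nonneg (x - y)) (sub_pos.2 h1).le]

theorem two_mul_abs_sub_mul_le (h : ConvexOct x y) :
    2 * |x - y| * ((T (x, y)).1 + (T (x, y)).2) ≤ |(T (x, y)).1 - (T (x, y)).2| := by
  have hA := h.tA_pos
  rw [T_fst_add_snd, T_fst_sub_snd, abs_neg, abs_mul, abs_mul, abs_of_pos hA]
  calc 2 * |x - y| * (tA x y * sumFactor x y)
      = tA x y * |x - y| * (2 * sumFactor x y) := by ring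
    _ ≤ tA x y * |x - y| * diffFactor x y := by
      gcongr
      exact h.two_mul_sumFactor_le_diffFactor
    _ ≤ tA x y * |x - y| * |diffFactor x y| := by
      gcongr
      exact le_abs_self _

end ConvexOct

theorem two_mul_abs_sub_le_of_convexOct_T {q : ℝ × ℝ} (h : ConvexOct q.1 q.2)
    (hT : ConvexOct (T q).1 (T q).2) : 2 * |q.1 - q.2| ≤ |(T q).1 - (T q).2| := by
  obtain ⟨x, y⟩ := q
  have hsum : 1 < (T (x, y)).1 + (T (x, y)).2 := ((convexOct_iff _ _).1 hT).1
  calc 2 * |x - y| ≤ 2 * |x - y| * ((T (x, y)).1 + (T (x, y)).2) :=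
        le_mul_of_one_le_right (by positivity) hsum.le
    _ ≤ _ := h.two_mul_abs_sub_mul_le

theorem T_diag {t : ℝ} (ht : t ≠ 0) :
    T (t, t) = ((1 + t) / (1 + 2 * t), (1 + t) / (1 + 2 * t)) := by
  have hDen : tDen t t = (1 + 2 * t) * (4 * t ^ 4) := by simp only [tDen]; ring
  simp only [T, tA, tB, hDen]
  by_cases h2 : 1 + 2 * t = 0
  · simp [h2]
  · ext <;> field_simp <;> ring

theorem mapsTo_T_convexDiagonal :
    Set.MapsTo T {q | q.1 = q.2 ∧ ConvexOct q.1 q.2} {q | q.1 = q.2 ∧ ConvexOct q.1 q.2} := by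
  rintro ⟨t, s⟩ ⟨rfl : t = s, hc⟩
  obtain ⟨ht1, ht2⟩ := (convexOct_diag_iff t).1 hc
  have hpos : (0 : ℝ) < 1 + 2 * t := by linarith
  rw [Set.mem_ofPred_eq, T_diag (by linarith), convexOct_diag_iff, lt_div_iff₀ hpos, div_lt_one hpos]
  exact ⟨rfl, by linarith, by linarith⟩

theorem nonpos_of_two_mul_le_succ_of_le {u : ℕ → ℝ} {C : ℝ} (hu : ∀ j, 2 * u j ≤ u (j + 1))
    (hC : ∀ j, u j ≤ C) : u 0 ≤ 0 := by
  have hgrow : ∀ j, 2 ^ j * u 0 ≤ u j := by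
    intro j
    induction j with
    | zero => simp
    | succ k ih => calc 2 ^ (k + 1) * u 0 = 2 * (2 ^ k * u 0) := by ring
        _ ≤ 2 * u k := by linarith
        _ ≤ u (k + 1) := hu k
  by_contra! h0
  obtain ⟨n, hn⟩ := pow_unbounded_of_one_lt (C / u 0) one_lt_two
  have := hgrow n
  have := hC n
  rw [div_lt_iff₀ h0] at hn
  linarith

/-- Forward rigidity: a convex `P(x,y)` has `x = y` (8-fold dihedral symmetry with
symmetry lines through the vertices) iff it has a full forward `T`-orbit of convex
octagons. -/
theorem forward_rigidity (x y : ℝ) (hconv : ConvexOct x y) :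
    x = y ↔
      ∃ p : ℕ → ℝ × ℝ, p 0 = (x, y) ∧
        ∀ j : ℕ, tDen (p j).1 (p j).2 ≠ 0 ∧ T (p j) = p (j + 1) ∧
          ConvexOct (p j).1 (p j).2 := by
  constructor
  · rintro rfl
    refine ⟨fun j => T^[j] (x, x), rfl, fun j => ?_⟩
    have hx : (x, x) ∈ {q : ℝ × ℝ | q.1 = q.2 ∧ ConvexOct q.1 q.2} := ⟨rfl, hconv⟩
    obtain ⟨-, hj⟩ := mapsTo_T_convexDiagonal.iterate j hx
    exact ⟨hj.tDen_pos.ne', (Function.iterate_succ_apply' T j (x, x)).symm, hj⟩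
  · rintro ⟨p, hp0, hp⟩
    have hstep (j : ℕ) : 2 * |(p j).1 - (p j).2| ≤ |(p (j + 1)).1 - (p (j + 1)).2| := by
      obtain ⟨-, hT, hc⟩ := hp j
      have hc' := (hp (j + 1)).2.2
      rw [← hT] at hc' ⊢
      exact two_mul_abs_sub_le_of_convexOct_T hc hc'
    have h0 := nonpos_of_two_mul_le_succ_of_le hstep fun j => (hp j).2.2.abs_sub_lt_one.le
    rw [hp0] at h0
    exact sub_eq_zero.1 (abs_nonpos_iff.1 h0)
end
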